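/- arXiv:1801.02213 — 2 statements merged into one kernel-verified Lean document; each statement's English description precedes it below -/
import Mathlib

section
/- Let p be an odd prime, n ≥ 1 an odd integer, and α a p-adic integer with α ≡ 2a (mod p) for some integer a with 1 ≤ a ≤ (p-1)/2. Then ∑_{k=0}^{p-1} ((α)_k / k!)^{np} ≡ 0 (mod p²) in ℤ_p. -/
/-!
Put `m = p - 2a`, so that `α ≡ -m (mod p)` with `m` odd and `m < p`. Since
`(-m)ₖ = (-1)ᵏ k! C(m, k)` and `k!` is a `p`-adic unit for `k < p`, the term `cₖ = (α)ₖ / k!`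
satisfies `cₖ ≡ (-1)ᵏ C(m, k) (mod p)`. Hence `cₖ ≡ 0` for `m < k < p`, and `cₖ ≡ -c_{m-k}` for
`k ≤ m` because `m` is odd. Raising to the odd power `np`, a multiple of `p`, turns `x ≡ -y (mod p)`
into `x^{np} ≡ -y^{np} (mod p²)`, so the terms with `k ≤ m` cancel in pairs `k ↔ m - k`, and the
others are divisible by `p^{np}`.
-/

open Finset Nat

theorem sq_dvd_pow_add_pow_of_dvd_add {R : Type*} [CommRing R] {p n : ℕ} {x y : R}
    (hodd : Odd (n * p)) (h : (p : R) ∣ x + y) :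
    (p : R) ^ 2 ∣ x ^ (n * p) + y ^ (n * p) := by
  have hn : (p : R) ∣ x ^ n - (-y) ^ n :=
    (sub_neg_eq_add x y ▸ h).trans (sub_dvd_pow_sub_pow x (-y) n)
  simpa [← pow_mul, hodd.neg_pow] using dvd_sub_pow_of_dvd_sub hn 1

theorem dvd_sum_range_of_dvd_add_reflect {R : Type*} [Semiring R] {r : R} {f : ℕ → R} {m : ℕ}
    (hm : Odd m) (h : ∀ k ≤ m, r ∣ f k + f (m - k)) : r ∣ ∑ k ∈ range (m + 1), f k := by
  obtain ⟨j, rfl⟩ := hm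
  have hpairs : ∑ k ∈ range (2 * j + 1 + 1), f k
      = ∑ k ∈ range (j + 1), (f k + f (2 * j + 1 - k)) := by
    rw [show 2 * j + 1 + 1 = (j + 1) + (j + 1) by ring, sum_range_add, sum_add_distrib,
      ← sum_range_reflect (fun k => f (2 * j + 1 - k))]
    congr 1
    exact sum_congr rfl fun k hk => congrArg f (by have := mem_range.1 hk; omega)
  rw [hpairs]
  exact dvd_sum fun k hk => h k (by have := mem_range.1 hk; omega)

theorem neg_one_pow_add_neg_one_pow_sub {R : Type*} [Ring R] {m k : ℕ} (hm : Odd m)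
    (hk : k ≤ m) : (-1 : R) ^ k + (-1) ^ (m - k) = 0 := by
  rcases Nat.even_or_odd k with hke | hko
  · simp [hke.neg_one_pow, (Nat.Odd.sub_even hk hm hke).neg_one_pow]
  · simp [hko.neg_one_pow, (Nat.Odd.sub_odd hm hko).neg_one_pow]

theorem ascPochhammer_eval_neg_natCast {R : Type*} [Ring R] (m k : ℕ) :
    (ascPochhammer R k).eval (-(m : R)) = (-1) ^ k * (k ! * m.choose k) := by
  rw [ascPochhammer_eval_neg_eq_descPochhammer, descPochhammer_eval_eq_descFactorial,
    descFactorial_eq_factorial_mul_choose, Nat.cast_mul]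

theorem map_ascPochhammer_eval {S T : Type*} [Semiring S] [Semiring T] (f : S →+* T)
    (k : ℕ) (x : S) : f ((ascPochhammer S k).eval x) = (ascPochhammer T k).eval (f x) := by
  rw [ascPochhammer_eval₂ f, Polynomial.eval₂_hom]

/-- `(x)ₖ / k!`, meaningful only when `k!` is a unit (`Ring.inverse` sends non-units to `0`). -/
noncomputable def ascPochhammerDivFactorial {R : Type*} [CommRing R] (x : R) (k : ℕ) : R :=
  (ascPochhammer R k).eval x * Ring.inverse (k ! : R)

theorem ascPochhammerDivFactorial_mul_factorial {R : Type*} [CommRing R] (x : R) {k : ℕ}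
    (hk : IsUnit (k ! : R)) :
    ascPochhammerDivFactorial x k * k ! = (ascPochhammer R k).eval x :=
  Ring.inverse_mul_cancel_right _ _ hk

namespace PadicInt

variable {p : ℕ} [Fact p.Prime]

theorem isUnit_factorial {k : ℕ} (hk : k < p) : IsUnit (k ! : ℤ_[p]) := by
  rw [isUnit_iff, norm_natCast_eq_one_iff]
  exact (Fact.out : p.Prime).coprime_factorial_of_lt hk

theorem coe_ascPochhammerDivFactorial (α : ℤ_[p]) {k : ℕ} (hk : k < p) :
    ((ascPochhammerDivFactorial α k : ℤ_[p]) : ℚ_[p])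
      = (ascPochhammer ℚ_[p] k).eval (α : ℚ_[p]) / k ! := by
  rw [eq_div_iff (Nat.cast_ne_zero.2 k.factorial_ne_zero)]
  have := congrArg Coe.ringHom (ascPochhammerDivFactorial_mul_factorial α (isUnit_factorial hk))
  rwa [map_ascPochhammer_eval, map_mul, map_natCast] at this

variable {α : ℤ_[p]} {m : ℕ}

theorem dvd_ascPochhammerDivFactorial_sub (hα : (p : ℤ_[p]) ∣ α + m) {k : ℕ} (hk : k < p) :
    (p : ℤ_[p]) ∣ ascPochhammerDivFactorial α k - (-1) ^ k * m.choose k := by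
  have hu := isUnit_factorial (p := p) hk
  rw [← hu.dvd_mul_right, sub_mul, ascPochhammerDivFactorial_mul_factorial α hu, mul_assoc,
    mul_comm (m.choose k : ℤ_[p]), ← ascPochhammer_eval_neg_natCast]
  exact (sub_neg_eq_add α (m : ℤ_[p]) ▸ hα).trans (Polynomial.sub_dvd_eval_sub _ _ _)

theorem dvd_ascPochhammerDivFactorial_of_lt (hα : (p : ℤ_[p]) ∣ α + m) {k : ℕ} (hmk : m < k)
    (hk : k < p) : (p : ℤ_[p]) ∣ ascPochhammerDivFactorial α k := by
  simpa [choose_eq_zero_of_lt hmk] using dvd_ascPochhammerDivFactorial_sub hα hk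

theorem dvd_ascPochhammerDivFactorial_add_reflect (hα : (p : ℤ_[p]) ∣ α + m) (hm : Odd m)
    (hmp : m < p) {k : ℕ} (hk : k ≤ m) :
    (p : ℤ_[p]) ∣ ascPochhammerDivFactorial α k + ascPochhammerDivFactorial α (m - k) := by
  have hsum : ascPochhammerDivFactorial α k + ascPochhammerDivFactorial α (m - k)
      = (ascPochhammerDivFactorial α k - (-1) ^ k * m.choose k)
        + (ascPochhammerDivFactorial α (m - k) - (-1) ^ (m - k) * m.choose (m - k)) := by
    rw [choose_symm hk]
    linear_combination (m.choose k : ℤ_[p]) * neg_one_pow_add_neg_one_pow_sub (R := ℤ_[p]) hm hk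
  rw [hsum]
  exact dvd_add (dvd_ascPochhammerDivFactorial_sub hα (by omega))
    (dvd_ascPochhammerDivFactorial_sub hα (by omega))

end PadicInt

theorem truncated_npFnp_divisibility_general (p : ℕ) [Fact p.Prime] (hp : Odd p)
    (n : ℕ) (hn2 : Odd n) (α : ℤ_[p]) (a : ℕ) (ha1 : 1 ≤ a)
    (ha2 : 2 * a ≤ p - 1) (hα : (p : ℤ_[p]) ∣ (α - 2 * a)) :
    ‖∑ k ∈ Finset.range p,
        ((ascPochhammer ℚ_[p] k).eval (α : ℚ_[p]) / (k.factorial : ℚ_[p])) ^ (n * p)‖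
      ≤ (p : ℝ) ^ (-2 : ℤ) := by
  set m := p - 2 * a
  have hmp : m < p := by omega
  have hm : Odd m := Nat.Odd.sub_even (by omega) hp (even_two_mul a)
  have hαm : (p : ℤ_[p]) ∣ α + m := by
    have : α + m = α - 2 * a + p := by
      push_cast [m, Nat.cast_sub (show 2 * a ≤ p by omega)]
      ring
    exact this ▸ dvd_add hα dvd_rfl
  have h2N : 2 ≤ n * p := Nat.mul_le_mul hn2.pos (Fact.out : p.Prime).two_le
  have hcoe : ∑ k ∈ range p, ((ascPochhammer ℚ_[p] k).eval (α : ℚ_[p]) / k !) ^ (n * p)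
      = ((∑ k ∈ range p, ascPochhammerDivFactorial α k ^ (n * p) : ℤ_[p]) : ℚ_[p]) := by
    rw [PadicInt.coe_sum]
    exact sum_congr rfl fun k hk => by
      rw [PadicInt.coe_pow, PadicInt.coe_ascPochhammerDivFactorial α (mem_range.1 hk)]
  rw [hcoe, PadicInt.padic_norm_e_of_padicInt, show (-2 : ℤ) = -((2 : ℕ) : ℤ) from rfl,
    PadicInt.norm_le_pow_iff_mem_span_pow, Ideal.mem_span_singleton,
    ← sum_range_add_sum_Ico _ hmp]
  refine dvd_add (dvd_sum_range_of_dvd_add_reflect hm fun k hk => ?_) (dvd_sum fun k hk => ?_)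
  · exact sq_dvd_pow_add_pow_of_dvd_add (hn2.mul hp)
      (PadicInt.dvd_ascPochhammerDivFactorial_add_reflect hαm hm hmp hk)
  · obtain ⟨hmk, hkp⟩ := mem_Ico.1 hk
    exact (pow_dvd_pow _ h2N).trans
      (pow_dvd_pow_of_dvd (PadicInt.dvd_ascPochhammerDivFactorial_of_lt hαm hmk hkp) _)

theorem truncated_npFnp_divisibility (p : ℕ) [Fact p.Prime] (hp : Odd p)
    (n : ℕ) (hn1 : 1 ≤ n) (hn2 : Odd n) (α : ℤ_[p]) (a : ℕ) (ha1 : 1 ≤ a)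
    (ha2 : 2 * a ≤ p - 1) (hα : (p : ℤ_[p]) ∣ (α - 2 * a)) :
    ‖∑ k ∈ Finset.range p,
        ((ascPochhammer ℚ_[p] k).eval (α : ℚ_[p]) / (k.factorial : ℚ_[p])) ^ (n * p)‖
      ≤ (p : ℝ) ^ (-2 : ℤ) :=
  truncated_npFnp_divisibility_general p hp n hn2 α a ha1 ha2 hα
end

section
/- Let m₁,…,m_r be non-negative integers and a a positive integer with a > m₁ + ⋯ + m_r. Then ∑_{k=0}^{a} (-a)_k (1+m₁)_k ⋯ (1+m_r)_k / ((1)_k^r * k!) = 0. -/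
/-!
Since `(-a)_k / k! = (-1)^k C(a, k)` and `(1 + m)_k / k! = (k + 1)_m / m!`, the `k`-th term equals
`(-1)^k C(a, k) P(k) / ∏ mᵢ!` for the polynomial `P(x) = ∏ (x + 1)_{mᵢ}` of degree `∑ mᵢ < a`.
The alternating binomial sum of `P` is (up to sign) its `a`-th forward difference at `0`, which
vanishes because `a` exceeds the degree.
-/

open Finset Polynomial Nat

theorem Polynomial.sum_range_neg_one_pow_mul_choose_mul_eval_eq_zero {R : Type*} [CommRing R]
    {P : R[X]} {n : ℕ} (hP : P.natDegree < n) :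
    ∑ k ∈ range (n + 1), (-1) ^ k * n.choose k * P.eval (k : R) = 0 := by
  have hdiff := congr_fun (fwdDiff_iter_eq_zero_of_degree_lt hP) 0
  rw [fwdDiff_iter_eq_sum_shift, Pi.zero_apply] at hdiff
  calc ∑ k ∈ range (n + 1), (-1) ^ k * n.choose k * P.eval (k : R)
      = (-1) ^ n *
          ∑ k ∈ range (n + 1), ((-1 : ℤ) ^ (n - k) * n.choose k) • P.eval (0 + k • 1) := by
        rw [mul_sum]
        refine sum_congr rfl fun k hk => ?_
        obtain ⟨j, rfl⟩ := Nat.exists_eq_add_of_le (Nat.lt_succ_iff.mp (mem_range.mp hk))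
        have hsign : (-1 : R) ^ (k + j) * (-1) ^ j = (-1) ^ k := by
          rw [pow_add, mul_assoc, ← pow_add, ← two_mul, pow_mul, neg_one_sq, one_pow, mul_one]
        simp only [zsmul_eq_mul, nsmul_one, zero_add, Nat.add_sub_cancel_left]
        push_cast
        linear_combination (-((k + j).choose k * P.eval (k : R) : R)) * hsign
    _ = 0 := by rw [hdiff, mul_zero]

theorem ascPochhammer_eval_neg_natCast_div_factorial {K : Type*} [Field K] [CharZero K]
    (a k : ℕ) : (ascPochhammer K k).eval (-(a : K)) / k ! = (-1) ^ k * a.choose k := by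
  rw [ascPochhammer_eval_neg_eq_descPochhammer, descPochhammer_eval_eq_descFactorial,
    Nat.descFactorial_eq_factorial_mul_choose, Nat.cast_mul, mul_div_assoc,
    mul_div_cancel_left₀ _ (Nat.cast_ne_zero.mpr (factorial_ne_zero _))]

theorem ascPochhammer_eval_one_add_div_factorial {K : Type*} [Field K] [CharZero K]
    (m k : ℕ) :
    (ascPochhammer K k).eval (1 + m : K) / k ! = (ascPochhammer K m).eval (k + 1 : K) / m ! := by
  have hk : (k ! : K) ≠ 0 := Nat.cast_ne_zero.mpr (factorial_ne_zero _)
  have hm : (m ! : K) ≠ 0 := Nat.cast_ne_zero.mpr (factorial_ne_zero _)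
  rw [div_eq_div_iff hk hm, add_comm (1 : K), mul_comm, factorial_mul_ascPochhammer, mul_comm,
    factorial_mul_ascPochhammer, add_comm]

theorem natDegree_prod_ascPochhammer_comp_X_add_one_le {R : Type*} [CommRing R] [IsDomain R]
    {ι : Type*} (s : Finset ι) (m : ι → ℕ) :
    (∏ i ∈ s, (ascPochhammer R (m i)).comp (X + 1)).natDegree ≤ ∑ i ∈ s, m i := by
  refine (natDegree_prod_le _ _).trans (sum_le_sum fun i _ => ?_)
  rw [natDegree_comp, ascPochhammer_natDegree, ← C_1, natDegree_X_add_C, mul_one]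

theorem karlsson_minton_term_eq {K : Type*} [Field K] [CharZero K] {ι : Type*} [Fintype ι]
    (m : ι → ℕ) (a k : ℕ) :
    ((ascPochhammer K k).eval (-(a : K)) * ∏ i, (ascPochhammer K k).eval (1 + m i : K))
        / ((ascPochhammer K k).eval 1 ^ Fintype.card ι * k !)
      = (-1) ^ k * a.choose k * (∏ i, (ascPochhammer K (m i)).comp (X + 1)).eval (k : K)
        / ∏ i, ((m i) ! : K) := by
  have hk : (k ! : K) ≠ 0 := Nat.cast_ne_zero.mpr (factorial_ne_zero _)
  calc _ = (ascPochhammer K k).eval (-(a : K)) / k ! *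
          ∏ i, ((ascPochhammer K k).eval (1 + m i : K) / k !) := by
        rw [ascPochhammer_eval_one, prod_div_distrib, prod_const, Finset.card_univ]
        field_simp
    _ = (-1) ^ k * a.choose k * ∏ i, ((ascPochhammer K (m i)).eval (k + 1 : K) / (m i) !) := by
        simp only [ascPochhammer_eval_neg_natCast_div_factorial,
          ascPochhammer_eval_one_add_div_factorial]
    _ = _ := by
        rw [prod_div_distrib, eval_prod, mul_div_assoc]
        simp only [eval_comp, eval_add, eval_X, eval_one]

theorem karlsson_minton_general (r : ℕ) (m : Fin r → ℕ) (a : ℕ)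
    (hgt : (∑ i, m i) < a) :
    ∑ k ∈ Finset.range (a + 1),
        ((ascPochhammer ℚ k).eval (-(a : ℚ))
            * ∏ i, (ascPochhammer ℚ k).eval ((1 : ℚ) + m i))
          / (((ascPochhammer ℚ k).eval (1 : ℚ)) ^ r * k.factorial) = 0 := by
  set P : ℚ[X] := ∏ i, (ascPochhammer ℚ (m i)).comp (X + 1)
  have hP : P.natDegree < a := (natDegree_prod_ascPochhammer_comp_X_add_one_le _ m).trans_lt hgt
  calc _ = ∑ k ∈ range (a + 1), (-1) ^ k * a.choose k * P.eval (k : ℚ) / ∏ i, ((m i) ! : ℚ) :=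
        sum_congr rfl fun k _ => by
          simpa only [Fintype.card_fin] using karlsson_minton_term_eq (K := ℚ) m a k
    _ = 0 := by rw [← sum_div, sum_range_neg_one_pow_mul_choose_mul_eval_eq_zero hP, zero_div]

theorem karlsson_minton (r : ℕ) (m : Fin r → ℕ) (a : ℕ) (ha : 0 < a)
    (hgt : (∑ i, m i) < a) :
    ∑ k ∈ Finset.range (a + 1),
        ((ascPochhammer ℚ k).eval (-(a : ℚ))
            * ∏ i, (ascPochhammer ℚ k).eval ((1 : ℚ) + m i))
          / (((ascPochhammer ℚ k).eval (1 : ℚ)) ^ r * k.factorial) = 0 :=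
  karlsson_minton_general r m a hgt
end
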